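/- The vectors L₁, L₂, L₃ and the polynomial Q(z) = Q₋₁·z + Q₀ satisfy conditions (2.10)–(2.12): (i) (I − P_k)L_k = 0 for k = 1, 2, 3; (ii) Σ_{j ≠ k} (P_k L_j + P_j L_k)/(z_k − z_j) + P_k·Q(z_k) = 0 for k = 1, 2, 3; (iii) Q₋₁ = −(P₁ + P₂ + P₃)·Q₋₁. -/
import Mathlib


noncomputable section
open Matrix Polynomial

/-- The 4×4 permutation matrix (over ℂ) of the transposition exchanging coordinates `i` and `j`. -/
def permMat (i j : Fin 4) : Matrix (Fin 4) (Fin 4) ℂ :=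
  Matrix.of fun k l => if l = Equiv.swap i j k then 1 else 0

/-- `P₁ = P(1,2)`. -/
def P1 : Matrix (Fin 4) (Fin 4) ℂ := permMat 0 1
/-- `P₂ = P(1,3)`. -/
def P2 : Matrix (Fin 4) (Fin 4) ℂ := permMat 0 2
/-- `P₃ = P(1,4)`. -/
def P3 : Matrix (Fin 4) (Fin 4) ℂ := permMat 0 3

/-- `A(z) = Σ_{k=1}^{3} P_k/(z − z_k)`. -/
def Amat (z₁ z₂ z₃ z : ℂ) : Matrix (Fin 4) (Fin 4) ℂ :=
  (z - z₁)⁻¹ • P1 + (z - z₂)⁻¹ • P2 + (z - z₃)⁻¹ • P3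

/-- `L₁ = (1,1,−1,−1)ᵀ`. -/
def L1 : Fin 4 → ℂ := ![1, 1, -1, -1]
/-- `L₂ = α·(1,−1,1,−1)ᵀ` with `α = −(z₃ − z₂)/(z₃ − z₁)`. -/
def L2 (z₁ z₂ z₃ : ℂ) : Fin 4 → ℂ := (-(z₃ - z₂) / (z₃ - z₁)) • ![1, -1, 1, -1]
/-- `L₃ = β·(1,−1,−1,1)ᵀ` with `β = (z₃ − z₂)/(z₂ − z₁)`. -/
def L3 (z₁ z₂ z₃ : ℂ) : Fin 4 → ℂ := ((z₃ - z₂) / (z₂ - z₁)) • ![1, -1, -1, 1]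
/-- `Q₋₁ = −[(z₂ − z₁)(z₃ − z₁)]⁻¹·(3,−1,−1,−1)ᵀ`. -/
def Qm1 (z₁ z₂ z₃ : ℂ) : Fin 4 → ℂ := -(((z₂ - z₁) * (z₃ - z₁))⁻¹ • ![3, -1, -1, -1])
/-- `Q₀ = [(z₂ − z₁)(z₃ − z₁)]⁻¹·(z₁N₁ + z₂N₂ + z₃N₃)`. -/
def Q0 (z₁ z₂ z₃ : ℂ) : Fin 4 → ℂ :=
  ((z₂ - z₁) * (z₃ - z₁))⁻¹ •
    (z₁ • (![1, 1, -1, -1] : Fin 4 → ℂ) + z₂ • (![1, -1, 1, -1] : Fin 4 → ℂ)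
      + z₃ • (![1, -1, -1, 1] : Fin 4 → ℂ))
/-- `Y₁(z) = Σ_{k=1}^{3} L_k/(z − z_k) + Q₋₁·z + Q₀`. -/
def Y1 (z₁ z₂ z₃ z : ℂ) : Fin 4 → ℂ :=
  (z - z₁)⁻¹ • L1 + (z - z₂)⁻¹ • L2 z₁ z₂ z₃ + (z - z₃)⁻¹ • L3 z₁ z₂ z₃
    + z • Qm1 z₁ z₂ z₃ + Q0 z₁ z₂ z₃

lemma mulVec_permMat (i j : Fin 4) (v : Fin 4 → ℂ) :
    permMat i j *ᵥ v = fun k => v (Equiv.swap i j k) := by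
  funext k
  simp [permMat, Matrix.mulVec, dotProduct, Fin.sum_univ_four]

set_option maxHeartbeats 2000000 in
/-- the vectors `L₁, L₂, L₃` and `Q(z) = Q₋₁·z + Q₀` satisfy conditions
(2.10)–(2.12). -/
theorem stmt_10 (z₁ z₂ z₃ : ℂ) (h12 : z₁ ≠ z₂) (h13 : z₁ ≠ z₃) (h23 : z₂ ≠ z₃) :
    ((1 - P1) *ᵥ L1 = 0 ∧ (1 - P2) *ᵥ L2 z₁ z₂ z₃ = 0 ∧ (1 - P3) *ᵥ L3 z₁ z₂ z₃ = 0) ∧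
    ((z₁ - z₂)⁻¹ • (P1 *ᵥ L2 z₁ z₂ z₃ + P2 *ᵥ L1)
        + (z₁ - z₃)⁻¹ • (P1 *ᵥ L3 z₁ z₂ z₃ + P3 *ᵥ L1)
        + P1 *ᵥ (z₁ • Qm1 z₁ z₂ z₃ + Q0 z₁ z₂ z₃) = 0 ∧
      (z₂ - z₁)⁻¹ • (P2 *ᵥ L1 + P1 *ᵥ L2 z₁ z₂ z₃)
        + (z₂ - z₃)⁻¹ • (P2 *ᵥ L3 z₁ z₂ z₃ + P3 *ᵥ L2 z₁ z₂ z₃)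
        + P2 *ᵥ (z₂ • Qm1 z₁ z₂ z₃ + Q0 z₁ z₂ z₃) = 0 ∧
      (z₃ - z₁)⁻¹ • (P3 *ᵥ L1 + P1 *ᵥ L3 z₁ z₂ z₃)
        + (z₃ - z₂)⁻¹ • (P3 *ᵥ L2 z₁ z₂ z₃ + P2 *ᵥ L3 z₁ z₂ z₃)
        + P3 *ᵥ (z₃ • Qm1 z₁ z₂ z₃ + Q0 z₁ z₂ z₃) = 0) ∧
    Qm1 z₁ z₂ z₃ = -((P1 + P2 + P3) *ᵥ Qm1 z₁ z₂ z₃) := by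
  have h12' : z₂ - z₁ ≠ 0 := sub_ne_zero.mpr h12.symm
  have h13' : z₃ - z₁ ≠ 0 := sub_ne_zero.mpr h13.symm
  have h23' : z₃ - z₂ ≠ 0 := sub_ne_zero.mpr h23.symm
  have h21' : z₁ - z₂ ≠ 0 := sub_ne_zero.mpr h12
  have h31' : z₁ - z₃ ≠ 0 := sub_ne_zero.mpr h13
  have h32' : z₂ - z₃ ≠ 0 := sub_ne_zero.mpr h23
  refine ⟨⟨?_, ?_, ?_⟩, ⟨?_, ?_, ?_⟩, ?_⟩ <;>
  · funext i
    fin_cases i <;>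
    · simp [P1, P2, P3, mulVec_permMat, Matrix.sub_mulVec, Matrix.add_mulVec,
        L1, L2, L3, Qm1, Q0, Equiv.swap_apply_def]
      try field_simp
      try ring
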